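/- Let (U,d) be a metric space and φ : U → (−∞,+∞] a proper, d-lower semicontinuous functional which is (λ,p)-geodesically convex for some λ ∈ ℝ and p ∈ (1,∞). Then the local slope admits the representation |∂φ|(u) = sup_{v ≠ u} ( (φ(u) − φ(v))/d(u,v) + (λ/p) d(u,v)^{p−1} )⁺ for all u ∈ D(φ), and |∂φ| is d-lower semicontinuous: if d(u_n,u) → 0 then liminf_n |∂φ|(u_n) ≥ |∂φ|(u). -/

import Mathlib

open Filter MeasureTheory Set Topology
open scoped ENNReal NNReal Classical

noncomputable section

namespace GradientFlowPaper

/-- The conjugate exponent `p' = p/(p-1)`. -/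
def conjExp (p : ℝ) : ℝ := p / (p - 1)

variable {U : Type*}

section MetricDefs

variable [MetricSpace U]

/-- The local slope `|∂φ|(u) = limsup_{v → u} (φ(u) - φ(v))⁺ / d(u,v)`. -/
def localSlope (φ : U → EReal) (u : U) : ℝ≥0∞ :=
  Filter.limsup (fun v => ENNReal.ofReal ((φ u - φ v).toReal / dist u v)) (𝓝[≠] u)

/-- The strong relaxed slope `|∂⁺φ|(u)`:  the infimum of `liminf |∂φ|(uₙ)` over all
sequences `uₙ →σ u` with `φ(uₙ) → φ(u)`. -/
def strongRelaxedSlope (σ : TopologicalSpace U) (φ : U → EReal) (u : U) : ℝ≥0∞ :=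
  sInf { L : ℝ≥0∞ | ∃ un : ℕ → U,
    Filter.Tendsto un Filter.atTop (@nhds U σ u) ∧
    Filter.Tendsto (fun n => φ (un n)) Filter.atTop (nhds (φ u)) ∧
    L = Filter.liminf (fun n => localSlope φ (un n)) Filter.atTop }

/-- The weak relaxed slope `|∂⁻φ|(u, φ̄)`: the infimum of `liminf |∂φ|(uₙ)` over all
sequences `uₙ →σ u` with `φ(uₙ) → φ̄`. -/
def weakRelaxedSlope (σ : TopologicalSpace U) (φ : U → EReal) (u : U) (c : ℝ) : ℝ≥0∞ :=
  sInf { L : ℝ≥0∞ | ∃ un : ℕ → U,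
    Filter.Tendsto un Filter.atTop (@nhds U σ u) ∧
    Filter.Tendsto (fun n => φ (un n)) Filter.atTop (nhds (c : EReal)) ∧
    L = Filter.liminf (fun n => localSlope φ (un n)) Filter.atTop }

/-- `u ∈ AC^p([0,T]; U)`. -/
def ACpOn (p T : ℝ) (u : ℝ → U) : Prop :=
  ∃ m : ℝ → ℝ, MeasureTheory.MemLp m (ENNReal.ofReal p) (volume.restrict (Icc (0:ℝ) T)) ∧
    ∀ s t : ℝ, 0 ≤ s → s ≤ t → t ≤ T → dist (u s) (u t) ≤ ∫ r in s..t, m r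

/-- `u ∈ AC^p_loc([0,∞); U)`. -/
def ACploc (p : ℝ) (u : ℝ → U) : Prop := ∀ T : ℝ, 0 < T → ACpOn p T u

/-- The metric derivative `|u'|(t)`, encoded as the `limsup` of the difference quotients
(it coincides with the metric derivative at every point where the latter exists). -/
def metricDeriv (u : ℝ → U) (t : ℝ) : ℝ :=
  Filter.limsup (fun s => dist (u s) (u t) / |s - t|) (𝓝[≠] t)

/-- A generalized solution of the metric `p`-gradient flow of `φ`: a pair `(u, c)` with
`u ∈ AC^p_loc`, satisfying the energy inequality
`(1/p)∫ₛᵗ |u'|^p + (1/p')∫ₛᵗ |∂⁻φ|(u,c)^{p'} + c(t) ≤ c(s)` for `0 ≤ s ≤ t` and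
`φ(u(t)) ≤ c(t)` for `t ≥ 0`. -/
def IsGeneralizedSolution (σ : TopologicalSpace U) (φ : U → EReal) (p : ℝ)
    (u : ℝ → U) (c : ℝ → ℝ) : Prop :=
  ACploc p u ∧
  (∀ s t : ℝ, 0 ≤ s → s ≤ t →
    c t ≤ c s ∧
    ENNReal.ofReal (1/p) * (∫⁻ r in Ioc s t, ENNReal.ofReal (metricDeriv u r ^ p)) +
      ENNReal.ofReal (1/(conjExp p)) *
        (∫⁻ r in Ioc s t, weakRelaxedSlope σ φ (u r) (c r) ^ (conjExp p)) ≤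
      ENNReal.ofReal (c s - c t)) ∧
  (∀ t : ℝ, 0 ≤ t → φ (u t) ≤ (c t : EReal))

/-- Absolute continuity of a real function on `[a,b]`, encoded through the integral
representation by an integrable density. -/
def ACRealOn (a b : ℝ) (f : ℝ → ℝ) : Prop :=
  ∃ g : ℝ → ℝ, MeasureTheory.IntegrableOn g (Icc a b) ∧
    ∀ t ∈ Icc a b, f t = f a + ∫ r in a..t, g r

/-- Local absolute continuity on `[0,∞)`. -/
def LocACReal (f : ℝ → ℝ) : Prop := ∀ T : ℝ, 0 < T → ACRealOn 0 T f

/-- Energy solution on `[0,T]`. -/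
def IsEnergySolutionOn (σ : TopologicalSpace U) (φ : U → EReal) (p T : ℝ)
    (u : ℝ → U) : Prop :=
  ACpOn p T u ∧
  (∀ t ∈ Icc (0:ℝ) T, φ (u t) ≠ ⊤) ∧
  ACRealOn 0 T (fun t => (φ (u t)).toReal) ∧
  (∫⁻ t in Ioc (0:ℝ) T, strongRelaxedSlope σ φ (u t) ^ (conjExp p)) < ⊤ ∧
  (∀ᵐ t ∂(volume : Measure ℝ), t ∈ Ioc (0:ℝ) T →
    deriv (fun s => (φ (u s)).toReal) t + (1/p) * metricDeriv u t ^ p +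
      (1/(conjExp p)) * ((strongRelaxedSlope σ φ (u t)).toReal) ^ (conjExp p) = 0)

/-- Energy solution of the metric `p`-gradient flow of `φ` on `[0,∞)`. -/
def IsEnergySolution (σ : TopologicalSpace U) (φ : U → EReal) (p : ℝ) (u : ℝ → U) : Prop :=
  ∀ T : ℝ, 0 < T → IsEnergySolutionOn σ φ p T u

/-- `g` is a strong upper gradient for `φ`. -/
def IsStrongUpperGradient (φ : U → EReal) (g : U → ℝ≥0∞) : Prop :=
  ∀ u : ℝ → U, ACploc 1 u →
    Measurable (fun t => g (u t)) ∧
    ∀ s t : ℝ, 0 ≤ s → s ≤ t →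
      (φ (u t) - φ (u s)).abs ≤ ∫⁻ r in Ioc s t, g (u r) * ENNReal.ofReal (metricDeriv u r)

/-- `(λ,p)`-geodesic convexity of `φ`. -/
def GeodConvex (φ : U → EReal) (lam p : ℝ) : Prop :=
  ∀ v₀ v₁ : U, φ v₀ ≠ ⊤ → φ v₁ ≠ ⊤ →
    ∃ γ : ℝ → U, γ 0 = v₀ ∧ γ 1 = v₁ ∧
      (∀ s t : ℝ, 0 ≤ s → s ≤ t → t ≤ 1 →
        dist (γ s) (γ t) = (t - s) * dist (γ 0) (γ 1)) ∧
      (∀ t : ℝ, 0 ≤ t → t ≤ 1 →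
        φ (γ t) ≤ ((1 - t : ℝ) : EReal) * φ (γ 0) + ((t : ℝ) : EReal) * φ (γ 1)
          - (((lam / p) * t * (1 - t) * dist (γ 0) (γ 1) ^ p : ℝ) : EReal))

/-- The conditional continuity property (CONT). -/
def CondCont (σ : TopologicalSpace U) (φ : U → EReal) : Prop :=
  ∀ (un : ℕ → U) (u : U),
    Filter.Tendsto un Filter.atTop (@nhds U σ u) →
    (∃ C : ℝ, ∀ n, φ (un n) ≤ (C : EReal) ∧ localSlope φ (un n) ≤ ENNReal.ofReal C) →
    Filter.Tendsto (fun n => φ (un n)) Filter.atTop (nhds (φ u))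

/-- The standing assumptions (A1)–(A4) of the paper, together with the properness of `φ`
and `1 < p`. -/
structure StandingAssumptions (σ : TopologicalSpace U) (dσ : U → U → ℝ)
    (φ : U → EReal) (p : ℝ) : Prop where
  p_gt : 1 < p
  complete : CompleteSpace U
  σ_weaker : ∀ s : Set U, σ.IsOpen s → IsOpen s
  σ_hausdorff : @T2Space U σ
  d_σ_lsc : ∀ (un vn : ℕ → U) (u v : U),
    Filter.Tendsto un Filter.atTop (@nhds U σ u) →
    Filter.Tendsto vn Filter.atTop (@nhds U σ v) →
    dist u v ≤ Filter.liminf (fun n => dist (un n) (vn n)) Filter.atTop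
  dσ_eq_zero : ∀ u v : U, dσ u v = 0 ↔ u = v
  dσ_symm : ∀ u v : U, dσ u v = dσ v u
  dσ_triangle : ∀ u v w : U, dσ u w ≤ dσ u v + dσ v w
  dσ_weaker : ∀ (un : ℕ → U) (u : U), Filter.Tendsto un Filter.atTop (@nhds U σ u) →
    Filter.Tendsto (fun n => dσ (un n) u) Filter.atTop (nhds (0:ℝ))
  proper : (∃ u : U, φ u ≠ ⊤) ∧ ∀ u : U, φ u ≠ ⊥
  σ_lsc : ∀ (un : ℕ → U) (u : U), Filter.Tendsto un Filter.atTop (@nhds U σ u) →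
    φ u ≤ Filter.liminf (fun n => φ (un n)) Filter.atTop
  compact_sublevels : ∀ (C : ℝ) (un : ℕ → U), (∀ n, φ (un n) ≤ (C : EReal)) →
    ∃ (u : U) (k : ℕ → ℕ), StrictMono k ∧
      Filter.Tendsto (fun n => un (k n)) Filter.atTop (@nhds U σ u)

/-- The phase space `X = {(u,φ̄) ∈ D(φ) × ℝ : φ̄ ≥ φ(u)}`. -/
abbrev Phase (φ : U → EReal) := {z : U × ℝ // φ z.1 ≤ (z.2 : EReal)}

/-- The metric `d_X((u,φ̄),(u',φ̄')) = d_σ(u,u') + |φ̄ - φ̄'|` on the phase space. -/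
def phaseDist (dσ : U → U → ℝ) (φ : U → EReal) (z w : Phase φ) : ℝ :=
  dσ z.1.1 w.1.1 + |z.1.2 - w.1.2|

/-- The family `S` of all generalized solutions, as curves in the phase space. -/
def genSolSet (σ : TopologicalSpace U) (φ : U → EReal) (p : ℝ) :
    Set (ℝ≥0 → Phase φ) :=
  { g | ∃ (u : ℝ → U) (c : ℝ → ℝ), IsGeneralizedSolution σ φ p u c ∧
      ∀ t : ℝ≥0, (g t).1 = (u (t : ℝ), c (t : ℝ)) }

/-- The effective domain `D(φ)` as a type. -/
abbrev Dom (φ : U → EReal) := {u : U // φ u ≠ ⊤}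

/-- The metric `d_φ(u,v) = d_σ(u,v) + |φ(u) - φ(v)|` on `D(φ)`. -/
def domDist (dσ : U → U → ℝ) (φ : U → EReal) (u v : Dom φ) : ℝ :=
  dσ u.1 v.1 + |(φ u.1).toReal - (φ v.1).toReal|

/-- The family `E` of all energy solutions, as curves in `D(φ)`. -/
def energySolSet (σ : TopologicalSpace U) (φ : U → EReal) (p : ℝ) :
    Set (ℝ≥0 → Dom φ) :=
  { g | ∃ u : ℝ → U, IsEnergySolution σ φ p u ∧ ∀ t : ℝ≥0, (g t).1 = u (t : ℝ) }

/-- Projection `π₁` from the phase space onto `D(φ)`. -/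
def projPhase (φ : U → EReal) : Phase φ → Dom φ :=
  fun z => ⟨z.1.1, (lt_of_le_of_lt z.2 (EReal.coe_lt_top _)).ne⟩

end MetricDefs

section Semiflow

variable {X : Type*}

/-- Convergence of a sequence with respect to an explicit distance function. -/
def Converges (dX : X → X → ℝ) (f : ℕ → X) (x : X) : Prop :=
  Filter.Tendsto (fun n => dX (f n) x) Filter.atTop (nhds (0:ℝ))

/-- Ball's notion of a generalized semiflow: (H1) existence, (H2) translation,
(H3) concatenation, (H4) upper semicontinuity with respect to initial data. -/
def IsGenSemiflow (dX : X → X → ℝ) (G : Set (ℝ≥0 → X)) : Prop :=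
  (∀ x : X, ∃ g ∈ G, g 0 = x) ∧
  (∀ g ∈ G, ∀ τ : ℝ≥0, (fun t => g (t + τ)) ∈ G) ∧
  (∀ g ∈ G, ∀ h ∈ G, ∀ t : ℝ≥0, h 0 = g t →
    (fun τ => if τ ≤ t then g τ else h (τ - t)) ∈ G) ∧
  (∀ gs : ℕ → (ℝ≥0 → X), (∀ n, gs n ∈ G) → ∀ x : X,
    Converges dX (fun n => gs n 0) x →
    ∃ k : ℕ → ℕ, StrictMono k ∧ ∃ g ∈ G, g 0 = x ∧
      ∀ t : ℝ≥0, Converges dX (fun n => gs (k n) t) (g t))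

/-- `T(t)E = {g(t) : g ∈ G, g(0) ∈ E}`. -/
def Tset (G : Set (ℝ≥0 → X)) (t : ℝ≥0) (E : Set X) : Set X :=
  { x | ∃ g ∈ G, g 0 ∈ E ∧ g t = x }

/-- Boundedness of a set with respect to an explicit distance function. -/
def IsBoundedIn (dX : X → X → ℝ) (B : Set X) : Prop :=
  ∃ R : ℝ, ∀ x ∈ B, ∀ y ∈ B, dX x y ≤ R

/-- (Sequential) compactness of a set with respect to an explicit distance function. -/
def SeqCompactIn (dX : X → X → ℝ) (A : Set X) : Prop :=
  ∀ f : ℕ → X, (∀ n, f n ∈ A) →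
    ∃ x ∈ A, ∃ k : ℕ → ℕ, StrictMono k ∧ Converges dX (fun n => f (k n)) x

/-- `A` attracts `B`: the Hausdorff semidistance `e(T(t)B, A)` tends to `0` as `t → ∞`. -/
def AttractsIn (dX : X → X → ℝ) (G : Set (ℝ≥0 → X)) (A B : Set X) : Prop :=
  ∀ ε : ℝ, 0 < ε → ∃ T : ℝ≥0, ∀ t : ℝ≥0, T ≤ t → ∀ x ∈ Tset G t B, ∃ a ∈ A, dX x a < ε

/-- A global attractor: non-empty, compact, invariant, attracting all bounded sets. -/
def IsGlobalAttractor (dX : X → X → ℝ) (G : Set (ℝ≥0 → X)) (A : Set X) : Prop :=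
  A.Nonempty ∧ SeqCompactIn dX A ∧ (∀ t : ℝ≥0, Tset G t A = A) ∧
  ∀ B : Set X, IsBoundedIn dX B → AttractsIn dX G A B

/-- A complete orbit of `G`. -/
def IsCompleteOrbit (G : Set (ℝ≥0 → X)) (w : ℝ → X) : Prop :=
  ∀ s : ℝ, (fun t : ℝ≥0 => w (s + (t : ℝ))) ∈ G

/-- A rest point of `G`: a point whose constant curve is a complete orbit. -/
def IsRestPoint (G : Set (ℝ≥0 → X)) (x : X) : Prop :=
  IsCompleteOrbit G (fun _ => x)

/-- The ω-limit set of a single trajectory. -/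
def OmegaLimit (dX : X → X → ℝ) (g : ℝ≥0 → X) : Set X :=
  { x | ∃ tn : ℕ → ℝ≥0, Filter.Tendsto (fun n => (tn n : ℝ)) Filter.atTop Filter.atTop ∧
      Converges dX (fun n => g (tn n)) x }

/-- (C0): strong measurability of a curve, i.e. a.e. pointwise limit on `(0,∞)` of
measurable countably-valued maps. -/
def StronglyMeasurableCurve (dX : X → X → ℝ) (g : ℝ≥0 → X) : Prop :=
  ∃ f : ℕ → ℝ≥0 → X,
    (∀ j, (Set.range (f j)).Countable ∧ ∀ x : X, MeasurableSet {t : ℝ≥0 | f j t = x}) ∧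
    ∀ᵐ t ∂(volume : Measure ℝ), 0 < t →
      Filter.Tendsto (fun j => dX (f j t.toNNReal) (g t.toNNReal)) Filter.atTop (nhds (0:ℝ))

/-- (C1): continuity of a curve on `(0,∞)`. -/
def ContCurveOnPos (dX : X → X → ℝ) (g : ℝ≥0 → X) : Prop :=
  ∀ t : ℝ≥0, 0 < t → ∀ tn : ℕ → ℝ≥0, Filter.Tendsto tn Filter.atTop (nhds t) →
    Converges dX (fun n => g (tn n)) (g t)

/-- (C3): continuity of a curve on `[0,∞)`. -/
def ContCurve (dX : X → X → ℝ) (g : ℝ≥0 → X) : Prop :=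
  ∀ t : ℝ≥0, ∀ tn : ℕ → ℝ≥0, Filter.Tendsto tn Filter.atTop (nhds t) →
    Converges dX (fun n => g (tn n)) (g t)

/-- (C2): compactness with local uniform convergence on compact subsets of `(0,∞)`. -/
def C2Property (dX : X → X → ℝ) (G : Set (ℝ≥0 → X)) : Prop :=
  ∀ gs : ℕ → (ℝ≥0 → X), (∀ n, gs n ∈ G) → ∀ x : X, Converges dX (fun n => gs n 0) x →
    ∃ k : ℕ → ℕ, StrictMono k ∧ ∃ g ∈ G, g 0 = x ∧
      ∀ a b : ℝ≥0, 0 < a → ∀ ε : ℝ, 0 < ε →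
        ∃ N : ℕ, ∀ n, N ≤ n → ∀ t : ℝ≥0, a ≤ t → t ≤ b → dX (gs (k n) t) (g t) < ε

/-- A Lyapunov function for `G`: continuous, decreasing along solutions, and constant
only along stationary complete orbits. -/
def IsLyapunov (dX : X → X → ℝ) (G : Set (ℝ≥0 → X)) (V : X → ℝ) : Prop :=
  (∀ (x : X) (xn : ℕ → X), Converges dX xn x →
    Filter.Tendsto (fun n => V (xn n)) Filter.atTop (nhds (V x))) ∧
  (∀ g ∈ G, ∀ s t : ℝ≥0, s ≤ t → V (g t) ≤ V (g s)) ∧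
  (∀ w : ℝ → X, IsCompleteOrbit G w → (∀ s t : ℝ, V (w s) = V (w t)) →
    ∀ s t : ℝ, w s = w t)

end Semiflow

section MinimizingMovements

variable [MetricSpace U]

/-- The nodes `t⁰ = 0`, `tⁿ = τ⁰ + ⋯ + τ^{n-1}` of a partition. -/
def nodes (τ : ℕ → ℝ) (n : ℕ) : ℝ := ∑ i ∈ Finset.range n, τ i

/-- A discrete solution of the variational approximation scheme. -/
def IsDiscreteSolution (φ : U → EReal) (p : ℝ) (τ : ℕ → ℝ) (u₀ : U) (Ud : ℕ → U) : Prop :=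
  Ud 0 = u₀ ∧
  ∀ n : ℕ, ∀ v : U,
    ((dist (Ud (n+1)) (Ud n) ^ p / (p * τ n ^ (p-1)) : ℝ) : EReal) + φ (Ud (n+1)) ≤
      ((dist v (Ud n) ^ p / (p * τ n ^ (p-1)) : ℝ) : EReal) + φ v

/-- The left-continuous piecewise constant interpolant of a discrete solution. -/
def interp (τ : ℕ → ℝ) (Ud : ℕ → U) (t : ℝ) : U :=
  if h : ∃ n, t ≤ nodes τ n then Ud (Nat.find h) else Ud 0

/-- `u` is a Generalized Minimizing Movement for `φ` starting from `u₀`. -/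
def IsGMM (σ : TopologicalSpace U) (φ : U → EReal) (p : ℝ) (u₀ : U) (u : ℝ → U) : Prop :=
  ∃ (τs : ℕ → ℕ → ℝ) (Us : ℕ → ℕ → U) (D : ℕ → ℝ),
    (∀ k n, 0 < τs k n) ∧ (∀ k n, τs k n ≤ D k) ∧
    Filter.Tendsto D Filter.atTop (nhds (0:ℝ)) ∧
    (∀ k, IsDiscreteSolution φ p (τs k) u₀ (Us k)) ∧
    ∀ t : ℝ, 0 ≤ t →
      Filter.Tendsto (fun k => interp (τs k) (Us k) t) Filter.atTop (@nhds U σ (u t))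

end MinimizingMovements

section Banach

variable {B : Type*} [NormedAddCommGroup B] [NormedSpace ℝ B]

/-- The Fréchet subdifferential `∂φ(u)` of `φ : B → (-∞,∞]` at `u ∈ D(φ)`. -/
def FrechetSubdiff (φ : B → EReal) (u : B) : Set (StrongDual ℝ B) :=
  { ξ | φ u ≠ ⊤ ∧ ∀ ε : ℝ, 0 < ε → ∃ δ : ℝ, 0 < δ ∧ ∀ v : B, ‖v - u‖ < δ →
      φ u + ((ξ (v - u) - ε * ‖v - u‖ : ℝ) : EReal) ≤ φ v }

/-- Weak convergence in the dual `B'` (tested against the bidual). -/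
def WeakConvDual (ξn : ℕ → StrongDual ℝ B) (ξ : StrongDual ℝ B) : Prop :=
  ∀ F : StrongDual ℝ (StrongDual ℝ B),
    Filter.Tendsto (fun n => F (ξn n)) Filter.atTop (nhds (F ξ))

/-- The limiting subdifferential `∂_ℓφ(u)`. -/
def LimitingSubdiff (φ : B → EReal) (u : B) : Set (StrongDual ℝ B) :=
  { ξ | ∃ (un : ℕ → B) (ξn : ℕ → StrongDual ℝ B),
      (∀ n, ξn n ∈ FrechetSubdiff φ (un n)) ∧
      Filter.Tendsto un Filter.atTop (nhds u) ∧
      WeakConvDual ξn ξ ∧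
      ∃ C : ℝ, ∀ n, φ (un n) ≤ (C : EReal) }

/-- The strong limiting subdifferential `∂_sφ(u)`. -/
def StrongLimitingSubdiff (φ : B → EReal) (u : B) : Set (StrongDual ℝ B) :=
  { ξ | ∃ (un : ℕ → B) (ξn : ℕ → StrongDual ℝ B),
      (∀ n, ξn n ∈ FrechetSubdiff φ (un n)) ∧
      Filter.Tendsto un Filter.atTop (nhds u) ∧
      Filter.Tendsto ξn Filter.atTop (nhds ξ) ∧
      Filter.Tendsto (fun n => φ (un n)) Filter.atTop (nhds (φ u)) }

/-- The `p`-duality map `J_p(v) = {ξ ∈ B' : ⟨ξ,v⟩ = ‖v‖^p = ‖ξ‖_*^{p'}}`. -/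
def Jdual (p : ℝ) (v : B) : Set (StrongDual ℝ B) :=
  { ξ | ξ v = ‖v‖ ^ p ∧ ‖ξ‖ ^ (conjExp p) = ‖v‖ ^ p }

/-- The minimal dual norm `inf {‖ξ‖_* : ξ ∈ S}` of a set of dual elements (`∞` if empty). -/
def minNormSubdiff (S : Set (StrongDual ℝ B)) : ℝ≥0∞ :=
  ⨅ ξ ∈ S, (‖ξ‖₊ : ℝ≥0∞)

/-- The elements of minimal dual norm of a set of dual elements. -/
def ArgminSubdiff (S : Set (StrongDual ℝ B)) : Set (StrongDual ℝ B) :=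
  { ξ | ξ ∈ S ∧ ∀ η ∈ S, ‖ξ‖ ≤ ‖η‖ }

/-- The chain rule for `φ` with respect to its limiting subdifferential. -/
def ChainRuleLimiting (φ : B → EReal) (p : ℝ) : Prop :=
  ∀ T : ℝ, 0 < T → ∀ (u : ℝ → B) (ξ : ℝ → StrongDual ℝ B),
    ACpOn p T u →
    MeasureTheory.MemLp ξ (ENNReal.ofReal (conjExp p)) (volume.restrict (Ioc (0:ℝ) T)) →
    (∀ᵐ t ∂(volume : Measure ℝ), t ∈ Ioc (0:ℝ) T → ξ t ∈ LimitingSubdiff φ (u t)) →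
    ACRealOn 0 T (fun t => (φ (u t)).toReal) ∧
    ∀ᵐ t ∂(volume : Measure ℝ), t ∈ Ioc (0:ℝ) T →
      deriv (fun s => (φ (u s)).toReal) t = ξ t (deriv u t)

/-- `(λ,q)`-convexity of `φ` on a Banach space. -/
def LamQConvex (φ : B → EReal) (lam q : ℝ) : Prop :=
  ∀ u₀ u₁ : B, ∀ θ : ℝ, 0 ≤ θ → θ ≤ 1 →
    φ ((1-θ) • u₀ + θ • u₁) ≤
      ((1-θ : ℝ) : EReal) * φ u₀ + ((θ : ℝ) : EReal) * φ u₁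
        - (((lam/q) * θ * (1-θ) * ‖u₀ - u₁‖ ^ q : ℝ) : EReal)

/-- The set of (metric) solutions of the doubly nonlinear equation
`J_p(u'(t)) + ∂_ℓφ(u(t)) ∋ 0`, as curves in `D(φ)`. -/
def dnSolSet (φ : B → EReal) (p : ℝ) : Set (ℝ≥0 → Dom φ) :=
  { g | ∃ u : ℝ → B, ACploc p u ∧
      (∀ᵐ t ∂(volume : Measure ℝ), 0 < t →
        ∃ ξ ∈ Jdual p (deriv u t), -ξ ∈ LimitingSubdiff φ (u t)) ∧
      ∀ t : ℝ≥0, (g t).1 = u (t : ℝ) }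

end Banach

end GradientFlowPaper

/-! Along a geodesic `γ` from `u` to `v`, `(λ,p)`-convexity bounds the difference quotient
`(φ(u) - φ(γₜ))/d(u,γₜ)` from below by `(φ(u) - φ(v))/d(u,v) + (λ/p)(1-t) d(u,v)^{p-1}`; letting
`t ↓ 0` shows that every term of the supremum is at most `|∂φ|(u)`. Conversely, each difference
quotient at `v` differs from the `v`-th term by `|λ/p| d(u,v)^{p-1}`, which vanishes as `v → u`.
For fixed `v`, the `v`-th term is lower semicontinuous in `u` because `φ` is, so the slope, a
supremum of such terms, is lower semicontinuous too. -/

namespace GradientFlowPaper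

section LimitsAlongFilters

variable {α β γ : Type*} [CompleteLinearOrder γ] [TopologicalSpace γ] [OrderTopology γ]

theorem le_liminf_of_tendsto_of_eventually_le {l : Filter α} [l.NeBot] {f g : α → γ} {c : γ}
    (hg : Tendsto g l (𝓝 c)) (hgf : ∀ᶠ x in l, g x ≤ f x) : c ≤ liminf f l :=
  hg.liminf_eq ▸ liminf_le_liminf hgf

theorem le_limsup_of_tendsto_of_eventually_le_comp {l : Filter α} [l.NeBot] {l' : Filter β}
    {f : β → γ} {g : α → γ} {e : α → β} {c : γ} (he : Tendsto e l l')
    (hg : Tendsto g l (𝓝 c)) (hgf : ∀ᶠ x in l, g x ≤ f (e x)) : c ≤ limsup f l' :=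
  calc c ≤ liminf (f ∘ e) l := le_liminf_of_tendsto_of_eventually_le hg hgf
    _ ≤ limsup (f ∘ e) l := liminf_le_limsup
    _ = limsup f (map e l) := limsup_comp f e l
    _ ≤ limsup f l' := limsup_le_limsup_of_le he

end LimitsAlongFilters

theorem LowerSemicontinuousAt.tendsto_min_self {α β : Type*} [TopologicalSpace α] [LinearOrder β]
    [TopologicalSpace β] [OrderTopology β] {f : α → β} {x : α} (hf : LowerSemicontinuousAt f x) :
    Tendsto (fun y => min (f y) (f x)) (𝓝 x) (𝓝 (f x)) :=
  tendsto_order.2 ⟨fun b hb => (hf b hb).mono fun _ hy => lt_min hy hb,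
    fun _ hb => Eventually.of_forall fun _ => (min_le_right _ _).trans_lt hb⟩

theorem tendsto_nhdsNE_of_dist_eq_mul {U : Type*} [MetricSpace U] {γ : ℝ → U} {u : U} {d : ℝ}
    (hd : 0 < d) (hγ : ∀ t ∈ Ioc (0 : ℝ) 1, dist u (γ t) = t * d) :
    Tendsto γ (𝓝[>] 0) (𝓝[≠] u) := by
  have hIoc : ∀ᶠ t in 𝓝[>] (0 : ℝ), t ∈ Ioc (0 : ℝ) 1 := Ioc_mem_nhdsGT zero_lt_one
  refine tendsto_nhdsWithin_iff.2 ⟨tendsto_iff_dist_tendsto_zero.2 ?_, ?_⟩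
  · have hlin : Tendsto (fun t : ℝ => t * d) (𝓝[>] 0) (𝓝 0) := by
      simpa using ((continuous_mul_const d).tendsto' 0 0 (zero_mul d)).mono_left
        nhdsWithin_le_nhds
    refine hlin.congr' ?_
    filter_upwards [hIoc] with t ht
    rw [dist_comm, hγ t ht]
  · filter_upwards [hIoc] with t ht hγu
    have := hγ t ht
    rw [show γ t = u from hγu, dist_self] at this
    exact (mul_pos ht.1 hd).ne' this.symm

theorem div_add_le_sub_div_of_le_convex_comb {a b x lam p d t : ℝ} (hd : 0 < d) (ht : 0 < t)
    (hx : x ≤ (1 - t) * a + t * b - lam / p * t * (1 - t) * d ^ p) :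
    (a - b) / d + lam / p * (1 - t) * d ^ (p - 1) ≤ (a - x) / (t * d) := by
  have hdp : d ^ p = d ^ (p - 1) * d := by
    rw [← Real.rpow_add_one hd.ne']
    ring_nf
  rw [le_div_iff₀ (mul_pos ht hd)]
  have : ((a - b) / d + lam / p * (1 - t) * d ^ (p - 1)) * (t * d)
      = t * (a - b) + lam / p * t * (1 - t) * d ^ p := by
    rw [hdp]
    field_simp
  linarith

section SlopeTerm

variable {U : Type*} [MetricSpace U] {φ : U → EReal} {lam p : ℝ}

def slopeTerm (φ : U → EReal) (lam p : ℝ) (u v : U) : ℝ≥0∞ :=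
  if φ v = ⊤ then 0 else
    ENNReal.ofReal ((φ u - φ v).toReal / dist u v + (lam / p) * dist u v ^ (p - 1))

theorem slopeTerm_le_localSlope (hbot : ∀ x, φ x ≠ ⊥) (hconv : GeodConvex φ lam p) {u v : U}
    (hu : φ u ≠ ⊤) (hne : v ≠ u) : slopeTerm φ lam p u v ≤ localSlope φ u := by
  unfold slopeTerm
  split_ifs with hv
  · exact zero_le
  obtain ⟨γ, hγ0, hγ1, hspeed, hcvx⟩ := hconv u v hu hv
  set a := (φ u).toReal
  set b := (φ v).toReal
  set d := dist u v
  have hd : 0 < d := dist_pos.2 hne.symm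
  have hdist : ∀ t ∈ Ioc (0 : ℝ) 1, dist u (γ t) = t * d := fun t ht => by
    simpa [hγ0, hγ1] using hspeed 0 t le_rfl ht.1.le ht.2
  have hquot : ∀ t ∈ Ioc (0 : ℝ) 1, (a - b) / d + lam / p * (1 - t) * d ^ (p - 1) ≤
      (φ u - φ (γ t)).toReal / dist u (γ t) := by
    intro t ht
    have hφγ : φ (γ t) ≤ (((1 - t) * a + t * b - lam / p * t * (1 - t) * d ^ p : ℝ) : EReal) := by
      have := hcvx t ht.1.le ht.2
      rw [hγ0, hγ1, ← EReal.coe_toReal hu (hbot u), ← EReal.coe_toReal hv (hbot v)] at this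
      exact this.trans_eq (by norm_cast)
    have hγt : φ (γ t) ≠ ⊤ := ne_top_of_le_ne_top (EReal.coe_ne_top _) hφγ
    rw [EReal.toReal_sub hu (hbot u) hγt (hbot _), hdist t ht]
    refine div_add_le_sub_div_of_le_convex_comb hd ht.1 ?_
    exact (EReal.toReal_le_toReal hφγ (hbot _) (EReal.coe_ne_top _)).trans_eq
      (EReal.toReal_coe _)
  rw [EReal.toReal_sub hu (hbot u) hv (hbot v)]
  refine le_limsup_of_tendsto_of_eventually_le_comp (tendsto_nhdsNE_of_dist_eq_mul hd hdist)
    (g := fun t => ENNReal.ofReal ((a - b) / d + lam / p * (1 - t) * d ^ (p - 1))) ?_ ?_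
  · have hcont : Continuous fun t : ℝ => (a - b) / d + lam / p * (1 - t) * d ^ (p - 1) := by
      fun_prop
    simpa using ENNReal.tendsto_ofReal ((hcont.tendsto 0).mono_left nhdsWithin_le_nhds)
  · filter_upwards [Ioc_mem_nhdsGT zero_lt_one] with t ht
    exact ENNReal.ofReal_le_ofReal (hquot t ht)

theorem localSlope_le_iSup_slopeTerm (hp : 1 < p) (u : U) :
    localSlope φ u ≤ ⨆ v : {v : U // v ≠ u}, slopeTerm φ lam p u v := by
  set S := ⨆ v : {v : U // v ≠ u}, slopeTerm φ lam p u v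
  rcases (𝓝[≠] u).eq_or_neBot with hisolated | _
  · simp [localSlope, hisolated]
  have hsmall : Tendsto (fun v => ENNReal.ofReal (|lam / p| * dist u v ^ (p - 1))) (𝓝[≠] u)
      (𝓝 0) := by
    have hcont : Continuous fun v => |lam / p| * dist u v ^ (p - 1) :=
      continuous_const.mul ((Real.continuous_rpow_const (by linarith)).comp
        (continuous_const.dist continuous_id))
    simpa [Real.zero_rpow (by linarith : p - 1 ≠ 0)] using
      ENNReal.tendsto_ofReal ((hcont.tendsto u).mono_left nhdsWithin_le_nhds)
  have hbound : ∀ᶠ v in 𝓝[≠] u, ENNReal.ofReal ((φ u - φ v).toReal / dist u v) ≤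
      S + ENNReal.ofReal (|lam / p| * dist u v ^ (p - 1)) := by
    filter_upwards [self_mem_nhdsWithin] with v (hvu : v ≠ u)
    by_cases hv : φ v = ⊤
    · simp [hv, EReal.sub_top]
    set x := (φ u - φ v).toReal / dist u v
    set c := lam / p * dist u v ^ (p - 1)
    have hc : |c| = |lam / p| * dist u v ^ (p - 1) := by
      rw [abs_mul, abs_of_nonneg (Real.rpow_nonneg dist_nonneg _)]
    have hterm : ENNReal.ofReal (x + c) ≤ S :=
      le_iSup_of_le (⟨v, hvu⟩ : {v : U // v ≠ u}) (by simp [slopeTerm, hv, x, c])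
    calc ENNReal.ofReal x ≤ ENNReal.ofReal ((x + c) + |c|) :=
          ENNReal.ofReal_le_ofReal (by linarith [neg_abs_le c])
      _ ≤ ENNReal.ofReal (x + c) + ENNReal.ofReal |c| := ENNReal.ofReal_add_le
      _ ≤ S + ENNReal.ofReal (|lam / p| * dist u v ^ (p - 1)) := by rw [hc]; gcongr
  calc localSlope φ u
      ≤ limsup (fun v => S + ENNReal.ofReal (|lam / p| * dist u v ^ (p - 1))) (𝓝[≠] u) :=
        limsup_le_limsup hbound
    _ = S := by simpa using (tendsto_const_nhds.add hsmall).limsup_eq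

theorem localSlope_eq_iSup_slopeTerm (hp : 1 < p) (hbot : ∀ x, φ x ≠ ⊥)
    (hconv : GeodConvex φ lam p) {u : U} (hu : φ u ≠ ⊤) :
    localSlope φ u = ⨆ v : {v : U // v ≠ u}, slopeTerm φ lam p u v :=
  (localSlope_le_iSup_slopeTerm hp u).antisymm
    (iSup_le fun v => slopeTerm_le_localSlope hbot hconv hu v.2)

theorem slopeTerm_le_liminf_localSlope {α : Type*} {l : Filter α} [l.NeBot]
    (hbot : ∀ x, φ x ≠ ⊥) (hlsc : LowerSemicontinuous φ) (hconv : GeodConvex φ lam p)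
    {un : α → U} {u v : U} (hu : φ u ≠ ⊤) (hun : ∀ n, φ (un n) ≠ ⊤)
    (hlim : Tendsto un l (𝓝 u)) (hne : v ≠ u) :
    slopeTerm φ lam p u v ≤ liminf (fun n => localSlope φ (un n)) l := by
  by_cases hv : φ v = ⊤
  · simp [slopeTerm, hv]
  -- `φ` is only lower semicontinuous, so approach `φ u` from below by `min (φ w) (φ u)`
  set m : U → ℝ := fun w => (min (φ w) (φ u)).toReal
  have hm : Tendsto (fun n => m (un n)) l (𝓝 (φ u).toReal) :=
    ((EReal.tendsto_toReal hu (hbot u)).comp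
      (LowerSemicontinuousAt.tendsto_min_self (hlsc u))).comp hlim
  set g : U → ℝ≥0∞ := fun w =>
    ENNReal.ofReal ((m w - (φ v).toReal) / dist w v + lam / p * dist w v ^ (p - 1))
  have hd : dist u v ≠ 0 := dist_ne_zero.2 hne.symm
  refine le_liminf_of_tendsto_of_eventually_le (g := fun n => g (un n)) ?_ ?_
  · have hdn : Tendsto (fun n => dist (un n) v) l (𝓝 (dist u v)) := hlim.dist tendsto_const_nhds
    have hpow : Tendsto (fun n => dist (un n) v ^ (p - 1)) l (𝓝 (dist u v ^ (p - 1))) :=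
      (Real.continuousAt_rpow_const _ (p - 1) (Or.inl hd)).tendsto.comp hdn
    have hreal := ((hm.sub_const (φ v).toReal).div hdn hd).add (hpow.const_mul (lam / p))
    simpa [slopeTerm, hv, g, EReal.toReal_sub hu (hbot u) hv (hbot v)] using
      ENNReal.tendsto_ofReal hreal
  · filter_upwards [hlim.eventually (isOpen_ne.mem_nhds hne.symm)] with n (hnv : un n ≠ v)
    refine le_trans ?_ (slopeTerm_le_localSlope hbot hconv (hun n) hnv.symm)
    have hmin : m (un n) ≤ (φ (un n)).toReal :=
      EReal.toReal_le_toReal (min_le_left _ _) (by simp [hbot]) (hun n)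
    have hpos : 0 < dist (un n) v := dist_pos.2 hnv
    simp only [slopeTerm, hv, if_false, g, EReal.toReal_sub (hun n) (hbot _) hv (hbot v)]
    gcongr

end SlopeTerm

/-- **Proposition (Representation and lower semicontinuity of the local slope).**
If `φ` is proper, `d`-lower semicontinuous and `(λ,p)`-geodesically convex, then
`|∂φ|(u) = sup_{v ≠ u} ((φ(u)-φ(v))/d(u,v) + (λ/p) d(u,v)^{p-1})⁺` on `D(φ)`,
and the local slope is `d`-lower semicontinuous. -/
theorem local_slope_representation_and_lsc
    {U : Type*} [MetricSpace U] (φ : U → EReal) (lam p : ℝ) (hp : 1 < p)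
    (hproper : (∃ u : U, φ u ≠ ⊤) ∧ ∀ u : U, φ u ≠ ⊥)
    (hlsc : LowerSemicontinuous φ)
    (hconv : GeodConvex φ lam p) :
    (∀ u : U, φ u ≠ ⊤ →
      localSlope φ u = ⨆ v : {v : U // v ≠ u},
        (if φ v.1 = ⊤ then 0 else
          ENNReal.ofReal ((φ u - φ v.1).toReal / dist u v.1
            + (lam / p) * dist u v.1 ^ (p - 1)))) ∧
    (∀ (un : ℕ → U) (u : U), φ u ≠ ⊤ → (∀ n, φ (un n) ≠ ⊤) →
      Filter.Tendsto (fun n => dist (un n) u) Filter.atTop (nhds (0:ℝ)) →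
      localSlope φ u ≤ Filter.liminf (fun n => localSlope φ (un n)) Filter.atTop) := by
  have hbot := hproper.2
  refine ⟨fun u hu => localSlope_eq_iSup_slopeTerm hp hbot hconv hu,
    fun un u hu hun hdist => ?_⟩
  rw [localSlope_eq_iSup_slopeTerm hp hbot hconv hu]
  exact iSup_le fun v => slopeTerm_le_liminf_localSlope hbot hlsc hconv hu hun
    (tendsto_iff_dist_tendsto_zero.2 hdist) v.2

end GradientFlowPaper
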